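/- For every pair of m-row diagrams C₁ and C₂, [C₁ ⋆ C₂] = [C₁] · [C₂] in ℤ/3ℤ[Ex_m]/J_m; that is, C ↦ [C] is a semigroup homomorphism from the concatenation semigroup of m-row diagrams to the multiplicative semigroup of ℤ/3ℤ[Ex_m]/J_m. -/

import Mathlib

open Finset

/-- The excess group `Ex_m`: triples `(v, h, ε)` with `v, h ∈ (ℤ/2ℤ)^m`,
`ε ∈ {±1}` (realized as `ℤˣ`), and the coordinates of `v` summing to `0`. -/
@[ext]
structure Ex (m : ℕ) where
  v : Fin m → ZMod 2
  h : Fin m → ZMod 2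
  ε : ℤˣ
  hv : ∑ i, v i = 0

namespace Ex

variable {m : ℕ}

/-- The exponent of `(−1)` in the product `(v,h,ε)·(v',h',ε')`:
`Σ_{1≤i<j≤m} v_j (v'_i + h'_i) + Σ_{1≤i≤j≤m} v'_j h_i`, computed from the
representatives in `{0,1}` of the `ℤ/2ℤ`-coordinates. -/
def expo (x y : Ex m) : ℕ :=
  (∑ p ∈ Finset.univ.filter (fun p : Fin m × Fin m => p.1 < p.2),
      (x.v p.2).val * ((y.v p.1).val + (y.h p.1).val)) +
  ∑ p ∈ Finset.univ.filter (fun p : Fin m × Fin m => p.1 ≤ p.2),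
      (y.v p.2).val * (x.h p.1).val

/-- The multiplication of `Ex_m`:
`(v,h,ε)·(v',h',ε') = (v+v', h+h', ε ε' (−1)^{Σ_{i<j} v_j(v'_i+h'_i) + Σ_{i≤j} v'_j h_i})`. -/
def mul' (x y : Ex m) : Ex m :=
  ⟨x.v + y.v, x.h + y.h, x.ε * y.ε * (-1) ^ expo x y, by
    simp [Finset.sum_add_distrib, x.hv, y.hv]⟩

/-- The identity element `(0, 0, +1)` of `Ex_m`. -/
def one' : Ex m := ⟨0, 0, 1, by simp⟩

/-- The element `(0, 0, −1)` of `Ex_m`. -/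
def negOne' : Ex m := ⟨0, 0, -1, by simp⟩

/-- Inversion in `Ex_m`. -/
def inv' (x : Ex m) : Ex m := ⟨x.v, x.h, x.ε * (-1) ^ expo x x, x.hv⟩

-- auxiliary: the ZMod-2-valued bilinear form underlying `expo`
private def Bf (a b c d : Fin m → ZMod 2) : ZMod 2 :=
  (∑ p ∈ Finset.univ.filter (fun p : Fin m × Fin m => p.1 < p.2),
      a p.2 * (c p.1 + d p.1)) +
  ∑ p ∈ Finset.univ.filter (fun p : Fin m × Fin m => p.1 ≤ p.2),
      c p.2 * b p.1

private def χ (a : ZMod 2) : ℤˣ := (-1) ^ a.val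

private lemma χ_add : ∀ a b : ZMod 2, χ (a + b) = χ a * χ b := by decide

private lemma val_cast : ∀ a : ZMod 2, ((a.val : ℕ) : ZMod 2) = a := by decide

private lemma neg_one_pow_nat (s : ℕ) : ((-1 : ℤˣ)) ^ s = χ ((s : ZMod 2)) := by
  induction s with
  | zero => simp [χ]
  | succ k ih =>
      rw [pow_succ, ih]
      have hc : ((k + 1 : ℕ) : ZMod 2) = ((k : ℕ) : ZMod 2) + 1 := by push_cast; ring
      have hx : ∀ a : ZMod 2, χ (a + 1) = χ a * (-1) := by decide
      rw [hc, hx]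

private lemma expo_cast (x y : Ex m) :
    ((expo x y : ℕ) : ZMod 2) = Bf x.v x.h y.v y.h := by
  unfold expo Bf
  push_cast
  simp [val_cast]

private lemma sign_eq (x y : Ex m) :
    ((-1 : ℤˣ)) ^ expo x y = χ (Bf x.v x.h y.v y.h) := by
  rw [neg_one_pow_nat, expo_cast]

private lemma Bf_add_left (a b a' b' c d : Fin m → ZMod 2) :
    Bf (a + a') (b + b') c d = Bf a b c d + Bf a' b' c d := by
  unfold Bf
  simp only [Pi.add_apply, add_mul, mul_add, Finset.sum_add_distrib]
  ring

private lemma Bf_add_right (a b c d c' d' : Fin m → ZMod 2) :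
    Bf a b (c + c') (d + d') = Bf a b c d + Bf a b c' d' := by
  unfold Bf
  simp only [Pi.add_apply, add_mul, mul_add, Finset.sum_add_distrib]
  ring

private lemma Bf_zero_left (c d : Fin m → ZMod 2) : Bf 0 0 c d = 0 := by
  unfold Bf; simp

private lemma Bf_zero_right (a b : Fin m → ZMod 2) : Bf a b 0 0 = 0 := by
  unfold Bf; simp

instance : Group (Ex m) where
  mul := mul'
  one := one'
  inv := inv'
  mul_assoc a b c := by
    refine Ex.ext ?_ ?_ ?_
    · show (a.v + b.v) + c.v = a.v + (b.v + c.v)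
      exact add_assoc _ _ _
    · show (a.h + b.h) + c.h = a.h + (b.h + c.h)
      exact add_assoc _ _ _
    · show (a.ε * b.ε * (-1) ^ expo a b) * c.ε * (-1) ^ expo (mul' a b) c =
        a.ε * (b.ε * c.ε * (-1) ^ expo b c) * (-1) ^ expo a (mul' b c)
      rw [sign_eq, sign_eq, sign_eq, sign_eq]
      have h1 : (mul' a b).v = a.v + b.v := rfl
      have h2 : (mul' a b).h = a.h + b.h := rfl
      have h3 : (mul' b c).v = b.v + c.v := rfl
      have h4 : (mul' b c).h = b.h + c.h := rfl
      rw [h1, h2, h3, h4, Bf_add_left, Bf_add_right, χ_add, χ_add]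
      simp only [mul_assoc, mul_comm, mul_left_comm]
  one_mul a := by
    refine Ex.ext ?_ ?_ ?_
    · show 0 + a.v = a.v
      exact zero_add _
    · show 0 + a.h = a.h
      exact zero_add _
    · show 1 * a.ε * (-1) ^ expo (one' : Ex m) a = a.ε
      have h0 : expo (one' : Ex m) a = 0 := by simp [expo, one']
      rw [h0]; simp
  mul_one a := by
    refine Ex.ext ?_ ?_ ?_
    · show a.v + 0 = a.v
      exact add_zero _
    · show a.h + 0 = a.h
      exact add_zero _
    · show a.ε * 1 * (-1) ^ expo a (one' : Ex m) = a.ε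
      have h0 : expo a (one' : Ex m) = 0 := by simp [expo, one']
      rw [h0]; simp
  inv_mul_cancel a := by
    refine Ex.ext ?_ ?_ ?_
    · show a.v + a.v = 0
      funext i
      exact CharTwo.add_self_eq_zero _
    · show a.h + a.h = 0
      funext i
      exact CharTwo.add_self_eq_zero _
    · show (a.ε * (-1) ^ expo a a) * a.ε * (-1) ^ expo (inv' a) a = 1
      have he : expo (inv' a) a = expo a a := rfl
      rw [he]
      have h1 : a.ε * a.ε = 1 := Int.units_mul_self a.ε
      have h2 : ((-1 : ℤˣ)) ^ expo a a * (-1) ^ expo a a = 1 :=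
        Int.units_mul_self _
      calc (a.ε * (-1) ^ expo a a) * a.ε * (-1) ^ expo a a
          = (a.ε * a.ε) * ((-1) ^ expo a a * (-1) ^ expo a a) := by
            simp only [mul_assoc, mul_comm, mul_left_comm]
        _ = 1 := by rw [h1, h2, one_mul]

lemma mul_def (x y : Ex m) : x * y = mul' x y := rfl
lemma one_def : (1 : Ex m) = one' := rfl

end Ex

open Finset

/-- An `m × n` diagram: each square is black or white (`true` = white). -/
abbrev Diagram (m n : ℕ) := Fin m → Fin n → Bool

/-- The finite set of white squares of a diagram. -/
def whites {m n : ℕ} (D : Diagram m n) : Finset (Fin m × Fin n) :=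
  Finset.univ.filter fun p => D p.1 p.2 = true

/-- Reading order (strict): row-by-row from top to bottom, left to right in each
row; this is the order of the labels of the white squares. -/
def rlt {m n : ℕ} (p q : Fin m × Fin n) : Prop :=
  p.1 < q.1 ∨ (p.1 = q.1 ∧ p.2 < q.2)

instance {m n : ℕ} : DecidableRel (@rlt m n) := fun _ _ => by unfold rlt; infer_instance

/-- The excess of a set `S` of squares: the vector in `(ℤ/2ℤ)^m` whose `i`-th
coordinate is the number of elements of `S` in row `i`, reduced mod 2. -/
def excess {m n : ℕ} (S : Finset (Fin m × Fin n)) : Fin m → ZMod 2 :=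
  fun i => ((S.filter fun p => p.1 = i).card : ZMod 2)

/-- `(V, H)` is a decomposition of the diagram `D`: `V` and `H` are disjoint,
their union is the set of white squares of `D`, and every column of `D` contains
an even number of elements of `V`. -/
def IsDecomp {m n : ℕ} (D : Diagram m n) (V H : Finset (Fin m × Fin n)) : Prop :=
  Disjoint V H ∧ V ∪ H = whites D ∧
    ∀ j : Fin n, Even ((V.filter fun p => p.2 = j).card)

/-- `inv(V)`: the number of pairs `(p, q) ∈ V × V` with `p` before `q` in reading
order (i.e. with smaller label) and `q` strictly below and strictly to the left
of `p`. -/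
def invV {m n : ℕ} (V : Finset (Fin m × Fin n)) : ℕ :=
  ((V ×ˢ V).filter fun pq =>
    rlt pq.1 pq.2 ∧ pq.1.1 < pq.2.1 ∧ pq.2.2 < pq.1.2).card

/-- `inv(V|H)`: the number of pairs `(p, q)` with `p ∈ H`, `q ∈ V` and `p` before
`q` in reading order (i.e. with smaller label). -/
def invMix {m n : ℕ} (V H : Finset (Fin m × Fin n)) : ℕ :=
  ((H ×ˢ V).filter fun pq => rlt pq.1 pq.2).card

/-- The signature `sgn(V,H) = (−1)^{inv(V) + inv(V|H)}` of a decomposition,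
as a sign in `ℤˣ`. -/
def sgnVH {m n : ℕ} (V H : Finset (Fin m × Fin n)) : ℤˣ :=
  (-1) ^ (invV V + invMix V H)

/-- The element `f(V,H) = (excess(V), excess(H), sgn(V,H))` of `Ex_m` attached to
a decomposition `(V,H)`; the proof that the coordinates of `excess(V)` sum to
zero (automatic for decompositions) is supplied as an argument. -/
def fEx {m n : ℕ} (V H : Finset (Fin m × Fin n))
    (hV : ∑ i, excess V i = 0) : Ex m :=
  ⟨excess V, excess H, sgnVH V H, hV⟩

/-- Concatenation of diagrams: `hcat D D'` places `D'` immediately to the right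
of `D`. -/
def hcat {m n₁ n₂ : ℕ} (D : Diagram m n₁) (D' : Diagram m n₂) :
    Diagram m (n₁ + n₂) :=
  fun i j => Fin.addCases (fun j₁ => D i j₁) (fun j₂ => D' i j₂) j

/-- The squares of the left factor, viewed inside the concatenated diagram. -/
def leftSq {m n₁ : ℕ} (n₂ : ℕ) (p : Fin m × Fin n₁) : Fin m × Fin (n₁ + n₂) :=
  (p.1, Fin.castAdd n₂ p.2)

/-- The squares of the right factor, viewed inside the concatenated diagram. -/
def rightSq {m n₂ : ℕ} (n₁ : ℕ) (p : Fin m × Fin n₂) : Fin m × Fin (n₁ + n₂) :=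
  (p.1, Fin.natAdd n₁ p.2)

/-- The part of an induced decomposition of a concatenation coming from parts
`S` (of the left diagram) and `S'` (of the right diagram). -/
def starPart {m n₁ n₂ : ℕ} (S : Finset (Fin m × Fin n₁))
    (S' : Finset (Fin m × Fin n₂)) : Finset (Fin m × Fin (n₁ + n₂)) :=
  S.image (leftSq n₂) ∪ S'.image (rightSq n₁)

lemma sum_excess_eq_card {m n : ℕ} (V : Finset (Fin m × Fin n)) :
    ∑ i, excess V i = (V.card : ZMod 2) := by
  unfold excess
  rw [← Nat.cast_sum]
  congr 1
  exact (Finset.card_eq_sum_card_fiberwise (fun p _ => Finset.mem_univ p.1)).symm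

/-- For a decomposition `(V,H)`, the coordinates of `excess(V)` sum to zero. -/
lemma IsDecomp.sum_excess_zero {m n : ℕ} {D : Diagram m n}
    {V H : Finset (Fin m × Fin n)} (h : IsDecomp D V H) :
    ∑ i, excess V i = 0 := by
  rw [sum_excess_eq_card]
  have hcol : V.card = ∑ j, ((V.filter fun p => p.2 = j).card) :=
    Finset.card_eq_sum_card_fiberwise (fun p _ => Finset.mem_univ p.2)
  rw [hcol, Nat.cast_sum]
  apply Finset.sum_eq_zero
  intro j _
  obtain ⟨t, ht⟩ := h.2.2 j
  rw [ht, Nat.cast_add]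
  exact CharTwo.add_self_eq_zero _

open Classical in
/-- The image `[C]` of a diagram in the group algebra `ℤ/3ℤ[Ex_m]`: the sum of
`f(V,H)` over all decompositions `(V,H)` of `C` (taken as a representative of
its class mod `J_m`). -/
noncomputable def bracket {m n : ℕ} (D : Diagram m n) :
    MonoidAlgebra (ZMod 3) (Ex m) :=
  ∑ VH ∈ ((Finset.univ :
      Finset (Finset (Fin m × Fin n) × Finset (Fin m × Fin n))).filter
      (fun VH => IsDecomp D VH.1 VH.2)).attach,
    MonoidAlgebra.single
      (fEx VH.1.1 VH.1.2 ((Finset.mem_filter.mp VH.2).2).sum_excess_zero)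
      (1 : ZMod 3)

/-- The two-sided ideal `J_m` of `ℤ/3ℤ[Ex_m]` generated by
`(0,0,+1) + (0,0,−1)`. -/
noncomputable def Jm (m : ℕ) : TwoSidedIdeal (MonoidAlgebra (ZMod 3) (Ex m)) :=
  TwoSidedIdeal.span
    {MonoidAlgebra.single Ex.one' 1 + MonoidAlgebra.single Ex.negOne' 1}

/-!
Gluing `(V₁, H₁)` and `(V₂, H₂)` side by side is a bijection from pairs of decompositions of `C₁`
and `C₂` to decompositions of `C₁ ⋆ C₂`, under which excesses add. The inversions of the glued
decomposition are those of the two factors together with the pairs formed by a square of one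
factor and a square of the other; for such a pair only the rows matter, so their number is a
bilinear expression in row counts whose parity is exactly the cocycle in the multiplication of
`Ex_m`. Hence `f` is multiplicative along the bijection, and `[C₁ ⋆ C₂] = [C₁] · [C₂]` holds in
`ℤ/3ℤ[Ex_m]` itself, before passing to the quotient by `J_m`.
-/

lemma card_filter_product_rows {ι α β : Type*} [Fintype ι] [DecidableEq ι]
    (S : Finset (ι × α)) (T : Finset (ι × β)) (R : ι → ι → Prop) [DecidableRel R] :
    #((S ×ˢ T).filter fun pq => R pq.1.1 pq.2.1) =
      ∑ ij ∈ univ.filter (fun ij : ι × ι => R ij.1 ij.2),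
        #(S.filter (·.1 = ij.1)) * #(T.filter (·.1 = ij.2)) := by
  rw [card_eq_sum_card_fiberwise (f := fun pq => (pq.1.1, pq.2.1))
    (t := univ.filter fun ij : ι × ι => R ij.1 ij.2) (fun pq hpq => by simp_all)]
  refine sum_congr rfl fun ij hij => ?_
  rw [← card_product, ← filter_product]
  congr 1
  ext ⟨p, q⟩
  simp only [mem_filter, mem_product, Prod.ext_iff, mem_univ, true_and] at hij ⊢
  constructor
  · rintro ⟨⟨hpq, -⟩, hij'⟩
    exact ⟨hpq, hij'⟩
  · rintro ⟨hpq, hp, hq⟩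
    exact ⟨⟨hpq, by rwa [hp, hq]⟩, hp, hq⟩

section Squares

variable {m n₁ n₂ : ℕ}

@[simp] lemma leftSq_fst (a : Fin m × Fin n₁) : (leftSq n₂ a).1 = a.1 := rfl
@[simp] lemma leftSq_snd (a : Fin m × Fin n₁) : (leftSq n₂ a).2 = Fin.castAdd n₂ a.2 := rfl
@[simp] lemma rightSq_fst (b : Fin m × Fin n₂) : (rightSq n₁ b).1 = b.1 := rfl
@[simp] lemma rightSq_snd (b : Fin m × Fin n₂) : (rightSq n₁ b).2 = Fin.natAdd n₁ b.2 := rfl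

lemma leftSq_injective : Function.Injective (leftSq (m := m) (n₁ := n₁) n₂) := by
  rintro ⟨i, j⟩ ⟨i', j'⟩ h
  simpa [leftSq] using h

lemma rightSq_injective : Function.Injective (rightSq (m := m) (n₂ := n₂) n₁) := by
  rintro ⟨i, j⟩ ⟨i', j'⟩ h
  simpa [rightSq] using h

@[simp] lemma castAdd_ne_natAdd (j₁ : Fin n₁) (j₂ : Fin n₂) :
    Fin.castAdd n₂ j₁ ≠ Fin.natAdd n₁ j₂ :=
  Fin.ne_of_val_ne (by simp; omega)

@[simp] lemma natAdd_ne_castAdd (j₁ : Fin n₁) (j₂ : Fin n₂) :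
    Fin.natAdd n₁ j₂ ≠ Fin.castAdd n₂ j₁ :=
  (castAdd_ne_natAdd j₁ j₂).symm

lemma leftSq_ne_rightSq (a : Fin m × Fin n₁) (b : Fin m × Fin n₂) :
    leftSq n₂ a ≠ rightSq n₁ b :=
  fun h => castAdd_ne_natAdd _ _ (congrArg Prod.snd h)

lemma forall_sq_iff {P : Fin m × Fin (n₁ + n₂) → Prop} :
    (∀ x, P x) ↔ (∀ a, P (leftSq n₂ a)) ∧ ∀ b, P (rightSq n₁ b) := by
  refine ⟨fun h => ⟨fun a => h _, fun b => h _⟩, fun h ⟨i, j⟩ => ?_⟩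
  induction j using Fin.addCases with
  | left j => exact h.1 (i, j)
  | right j => exact h.2 (i, j)

@[simp] lemma leftSq_mem_starPart {A : Finset (Fin m × Fin n₁)} {B : Finset (Fin m × Fin n₂)}
    {a : Fin m × Fin n₁} : leftSq n₂ a ∈ starPart A B ↔ a ∈ A := by
  simp [starPart, leftSq_injective.eq_iff, (leftSq_ne_rightSq _ _).symm]

@[simp] lemma rightSq_mem_starPart {A : Finset (Fin m × Fin n₁)} {B : Finset (Fin m × Fin n₂)}
    {b : Fin m × Fin n₂} : rightSq n₁ b ∈ starPart A B ↔ b ∈ B := by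
  simp [starPart, rightSq_injective.eq_iff, leftSq_ne_rightSq]

lemma starPart_ext {S T : Finset (Fin m × Fin (n₁ + n₂))}
    (hl : ∀ a, leftSq n₂ a ∈ S ↔ leftSq n₂ a ∈ T) (hr : ∀ b, rightSq n₁ b ∈ S ↔ rightSq n₁ b ∈ T) :
    S = T :=
  Finset.ext (forall_sq_iff.2 ⟨hl, hr⟩)

noncomputable def starEquiv :
    Finset (Fin m × Fin n₁) × Finset (Fin m × Fin n₂) ≃ Finset (Fin m × Fin (n₁ + n₂)) where
  toFun AB := starPart AB.1 AB.2
  invFun S := (S.preimage (leftSq n₂) leftSq_injective.injOn,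
    S.preimage (rightSq n₁) rightSq_injective.injOn)
  left_inv AB := by ext <;> simp
  right_inv S := starPart_ext (by simp) (by simp)

lemma starPart_inj {A A' : Finset (Fin m × Fin n₁)} {B B' : Finset (Fin m × Fin n₂)} :
    starPart A B = starPart A' B' ↔ A = A' ∧ B = B' :=
  (starEquiv.injective.eq_iff (a := (A, B)) (b := (A', B'))).trans Prod.ext_iff

lemma starPart_union (A A' : Finset (Fin m × Fin n₁)) (B B' : Finset (Fin m × Fin n₂)) :
    starPart A B ∪ starPart A' B' = starPart (A ∪ A') (B ∪ B') :=
  starPart_ext (by simp) (by simp)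

lemma disjoint_starPart_iff {A A' : Finset (Fin m × Fin n₁)} {B B' : Finset (Fin m × Fin n₂)} :
    Disjoint (starPart A B) (starPart A' B') ↔ Disjoint A A' ∧ Disjoint B B' := by
  simp only [disjoint_left]
  rw [forall_sq_iff]
  simp

lemma sum_starPart {M : Type*} [AddCommMonoid M] (A : Finset (Fin m × Fin n₁))
    (B : Finset (Fin m × Fin n₂)) (f : Fin m × Fin (n₁ + n₂) → M) :
    ∑ x ∈ starPart A B, f x = ∑ a ∈ A, f (leftSq n₂ a) + ∑ b ∈ B, f (rightSq n₁ b) := by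
  rw [starPart, sum_union, sum_image leftSq_injective.injOn,
    sum_image rightSq_injective.injOn]
  simp only [disjoint_left, mem_image]
  rintro _ ⟨a, -, rfl⟩ ⟨b, -, h⟩
  exact leftSq_ne_rightSq a b h.symm

lemma card_filter_starPart (A : Finset (Fin m × Fin n₁)) (B : Finset (Fin m × Fin n₂))
    (P : Fin m × Fin (n₁ + n₂) → Prop) [DecidablePred P] :
    #((starPart A B).filter P) = #(A.filter (P ∘ leftSq n₂)) + #(B.filter (P ∘ rightSq n₁)) := by
  simp only [card_filter, sum_starPart, Function.comp_apply]

lemma card_filter_product_starPart (A A' : Finset (Fin m × Fin n₁))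
    (B B' : Finset (Fin m × Fin n₂))
    (P : (Fin m × Fin (n₁ + n₂)) × (Fin m × Fin (n₁ + n₂)) → Prop) [DecidablePred P] :
    #((starPart A B ×ˢ starPart A' B').filter P) =
      #((A ×ˢ A').filter fun pq => P (leftSq n₂ pq.1, leftSq n₂ pq.2)) +
      #((A ×ˢ B').filter fun pq => P (leftSq n₂ pq.1, rightSq n₁ pq.2)) +
      #((B ×ˢ A').filter fun pq => P (rightSq n₁ pq.1, leftSq n₂ pq.2)) +
      #((B ×ˢ B').filter fun pq => P (rightSq n₁ pq.1, rightSq n₁ pq.2)) := by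
  simp only [card_filter, sum_product, sum_starPart, sum_add_distrib]
  ring

@[simp] lemma castAdd_lt_castAdd_iff {j j' : Fin n₁} :
    Fin.castAdd n₂ j < Fin.castAdd n₂ j' ↔ j < j' := by
  rw [Fin.lt_def, Fin.lt_def, Fin.val_castAdd, Fin.val_castAdd]

@[simp] lemma castAdd_lt_natAdd (j₁ : Fin n₁) (j₂ : Fin n₂) :
    Fin.castAdd n₂ j₁ < Fin.natAdd n₁ j₂ := by
  rw [Fin.lt_def, Fin.val_castAdd, Fin.val_natAdd]
  omega

@[simp] lemma not_natAdd_lt_castAdd (j₁ : Fin n₁) (j₂ : Fin n₂) :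
    ¬Fin.natAdd n₁ j₂ < Fin.castAdd n₂ j₁ :=
  (castAdd_lt_natAdd j₁ j₂).asymm

@[simp] lemma rlt_leftSq_leftSq (a a' : Fin m × Fin n₁) :
    rlt (leftSq n₂ a) (leftSq n₂ a') ↔ rlt a a' := by
  simp [rlt]

@[simp] lemma rlt_rightSq_rightSq (b b' : Fin m × Fin n₂) :
    rlt (rightSq n₁ b) (rightSq n₁ b') ↔ rlt b b' := by
  simp [rlt]

@[simp] lemma rlt_leftSq_rightSq (a : Fin m × Fin n₁) (b : Fin m × Fin n₂) :
    rlt (leftSq n₂ a) (rightSq n₁ b) ↔ a.1 ≤ b.1 := by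
  simp [rlt, le_iff_lt_or_eq]

@[simp] lemma rlt_rightSq_leftSq (a : Fin m × Fin n₁) (b : Fin m × Fin n₂) :
    rlt (rightSq n₁ b) (leftSq n₂ a) ↔ b.1 < a.1 := by
  simp [rlt]

end Squares

section Decompositions

variable {m n₁ n₂ : ℕ}

@[simp] lemma mem_whites {n : ℕ} {D : Diagram m n} {p : Fin m × Fin n} :
    p ∈ whites D ↔ D p.1 p.2 = true := by
  simp [whites]

lemma whites_hcat (C₁ : Diagram m n₁) (C₂ : Diagram m n₂) :
    whites (hcat C₁ C₂) = starPart (whites C₁) (whites C₂) :=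
  starPart_ext (fun _ => by simp [hcat]) (fun _ => by simp [hcat])

lemma isDecomp_hcat_starPart_iff {C₁ : Diagram m n₁} {C₂ : Diagram m n₂}
    {V₁ H₁ : Finset (Fin m × Fin n₁)} {V₂ H₂ : Finset (Fin m × Fin n₂)} :
    IsDecomp (hcat C₁ C₂) (starPart V₁ V₂) (starPart H₁ H₂) ↔
      IsDecomp C₁ V₁ H₁ ∧ IsDecomp C₂ V₂ H₂ := by
  have hcol (j : Fin (n₁ + n₂)) := card_filter_starPart V₁ V₂ (fun p => p.2 = j)
  simp only [IsDecomp, disjoint_starPart_iff, starPart_union, whites_hcat, starPart_inj,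
    Fin.forall_fin_add, hcol]
  simp only [Function.comp_def, leftSq_snd, rightSq_snd, Fin.castAdd_inj, Fin.natAdd_inj,
    castAdd_ne_natAdd, natAdd_ne_castAdd, filter_false, card_empty, add_zero, zero_add]
  tauto

end Decompositions

section Signs

variable {m n₁ n₂ : ℕ}

lemma excess_starPart (A : Finset (Fin m × Fin n₁)) (B : Finset (Fin m × Fin n₂)) :
    excess (starPart A B) = excess A + excess B := by
  funext i
  simp only [excess, card_filter_starPart, Function.comp_def, leftSq_fst, rightSq_fst,
    Nat.cast_add, Pi.add_apply]
  rfl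

lemma invV_starPart (A : Finset (Fin m × Fin n₁)) (B : Finset (Fin m × Fin n₂)) :
    invV (starPart A B) = invV A + invV B + #((B ×ˢ A).filter fun pq => pq.1.1 < pq.2.1) := by
  simp only [invV, card_filter_product_starPart, rlt_leftSq_leftSq, rlt_leftSq_rightSq,
    rlt_rightSq_leftSq, rlt_rightSq_rightSq, leftSq_fst, leftSq_snd, rightSq_fst, rightSq_snd,
    castAdd_lt_castAdd_iff, castAdd_lt_natAdd, not_natAdd_lt_castAdd, Fin.natAdd_lt_natAdd_iff,
    and_false, and_true, and_self, filter_false, card_empty, add_zero]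
  ring

lemma invMix_starPart (V₁ H₁ : Finset (Fin m × Fin n₁)) (V₂ H₂ : Finset (Fin m × Fin n₂)) :
    invMix (starPart V₁ V₂) (starPart H₁ H₂) = invMix V₁ H₁ + invMix V₂ H₂ +
      #((H₁ ×ˢ V₂).filter fun pq => pq.1.1 ≤ pq.2.1) +
      #((H₂ ×ˢ V₁).filter fun pq => pq.1.1 < pq.2.1) := by
  simp only [invMix, card_filter_product_starPart, rlt_leftSq_leftSq, rlt_leftSq_rightSq,
    rlt_rightSq_leftSq, rlt_rightSq_rightSq]
  ring

lemma cast_invV_add_invMix_starPart (V₁ H₁ : Finset (Fin m × Fin n₁))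
    (V₂ H₂ : Finset (Fin m × Fin n₂)) :
    ((invV (starPart V₁ V₂) + invMix (starPart V₁ V₂) (starPart H₁ H₂) : ℕ) : ZMod 2) =
      ((invV V₁ + invMix V₁ H₁ : ℕ) : ZMod 2) + ((invV V₂ + invMix V₂ H₂ : ℕ) : ZMod 2) +
        Ex.Bf (excess V₁) (excess H₁) (excess V₂) (excess H₂) := by
  rw [invV_starPart, invMix_starPart, card_filter_product_rows V₂ V₁ (· < ·),
    card_filter_product_rows H₁ V₂ (· ≤ ·), card_filter_product_rows H₂ V₁ (· < ·)]
  simp only [Ex.Bf, excess]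
  push_cast
  simp only [mul_add, sum_add_distrib, mul_comm]
  ring

lemma fEx_starPart {V₁ H₁ : Finset (Fin m × Fin n₁)} {V₂ H₂ : Finset (Fin m × Fin n₂)}
    (h₁ : ∑ i, excess V₁ i = 0) (h₂ : ∑ i, excess V₂ i = 0)
    (h : ∑ i, excess (starPart V₁ V₂) i = 0) :
    fEx (starPart V₁ V₂) (starPart H₁ H₂) h = fEx V₁ H₁ h₁ * fEx V₂ H₂ h₂ := by
  refine Ex.ext (excess_starPart V₁ V₂) (excess_starPart H₁ H₂) ?_
  change sgnVH _ _ = sgnVH V₁ H₁ * sgnVH V₂ H₂ * (-1) ^ Ex.expo (fEx V₁ H₁ h₁) (fEx V₂ H₂ h₂)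
  simp only [sgnVH, Ex.neg_one_pow_nat, Ex.expo_cast, cast_invV_add_invMix_starPart, Ex.χ_add]
  rfl

end Signs

section Bracket

variable {m n n₁ n₂ : ℕ}

open Classical in
noncomputable def decompositions (D : Diagram m n) :
    Finset (Finset (Fin m × Fin n) × Finset (Fin m × Fin n)) :=
  univ.filter fun VH => IsDecomp D VH.1 VH.2

@[simp] lemma mem_decompositions {D : Diagram m n}
    {VH : Finset (Fin m × Fin n) × Finset (Fin m × Fin n)} : VH ∈ decompositions D ↔ IsDecomp D VH.1 VH.2 := by
  simp [decompositions]

/-- `fEx` with its proof argument dropped (junk value `1` where the proof is missing), so that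
sums over decompositions can be reindexed. -/
noncomputable def fExD (V H : Finset (Fin m × Fin n)) : Ex m :=
  if h : ∑ i, excess V i = 0 then fEx V H h else 1

lemma bracket_eq_sum (D : Diagram m n) :
    bracket D = ∑ VH ∈ decompositions D, MonoidAlgebra.single (fExD VH.1 VH.2) (1 : ZMod 3) := by
  rw [← sum_attach (decompositions D) fun VH => MonoidAlgebra.single (fExD VH.1 VH.2) 1]
  refine sum_congr rfl fun VH _ => ?_
  rw [fExD, dif_pos (mem_decompositions.1 VH.2).sum_excess_zero]

lemma fExD_starPart {V₁ H₁ : Finset (Fin m × Fin n₁)} {V₂ H₂ : Finset (Fin m × Fin n₂)}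
    (h₁ : ∑ i, excess V₁ i = 0) (h₂ : ∑ i, excess V₂ i = 0) :
    fExD (starPart V₁ V₂) (starPart H₁ H₂) = fExD V₁ H₁ * fExD V₂ H₂ := by
  have h : ∑ i, excess (starPart V₁ V₂) i = 0 := by
    simp [excess_starPart, sum_add_distrib, h₁, h₂]
  rw [fExD, fExD, fExD, dif_pos h, dif_pos h₁, dif_pos h₂, fEx_starPart]

lemma bracket_hcat_eq (C₁ : Diagram m n₁) (C₂ : Diagram m n₂) :
    bracket (hcat C₁ C₂) = bracket C₁ * bracket C₂ := by
  rw [bracket_eq_sum, bracket_eq_sum, bracket_eq_sum, sum_mul_sum, ← sum_product']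
  simp only [MonoidAlgebra.single_mul_single, one_mul]
  symm
  refine sum_equiv ((Equiv.prodProdProdComm _ _ _ _).trans (starEquiv.prodCongr starEquiv))
    (fun _ => by simp [starEquiv, isDecomp_hcat_starPart_iff]) ?_
  rintro ⟨⟨V₁, H₁⟩, V₂, H₂⟩ h
  rw [mem_product, mem_decompositions, mem_decompositions] at h
  exact congrArg (MonoidAlgebra.single · 1)
    (fExD_starPart h.1.sum_excess_zero h.2.sum_excess_zero).symm

end Bracket

/-- For all `m`-row diagrams `C₁, C₂`,
`[C₁ ⋆ C₂] = [C₁] · [C₂]` in `ℤ/3ℤ[Ex_m]/J_m`; i.e. `C ↦ [C]` is a semigroup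
homomorphism from the concatenation semigroup of `m`-row diagrams to the
multiplicative semigroup of `ℤ/3ℤ[Ex_m]/J_m`.  (Equality in the quotient is
expressed by the difference lying in `J_m`.) -/
theorem bracket_hcat (m n₁ n₂ : ℕ) (C₁ : Diagram m n₁) (C₂ : Diagram m n₂) :
    bracket (hcat C₁ C₂) - bracket C₁ * bracket C₂ ∈ Jm m := by
  rw [bracket_hcat_eq, sub_self]
  exact (Jm m).zero_mem
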